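/- For every real t with 0 ≤ t < 1, the complete elliptic integral of the first kind has the Gauss hypergeometric expansion ∫_{0}^{1} dx/√((1−x²)(1−t·x²)) = (π/2)·Σ_{n=0}^{∞} ((1/2)_n / n!)²·tⁿ, where (1/2)_n = ∏_{k=0}^{n−1} (1/2 + k) is the Pochhammer symbol; in particular the improper integral on the left converges. -/

import Mathlib

/-!
Substituting `x = sin θ` turns the integral into `∫₀^{π/2} (1 - t sin²θ)^(-1/2) dθ`. The binomial
series `(1 - u)^(-1/2) = ∑ (1/2)ₙ/n! uⁿ` converges absolutely for `|u| < 1`, and since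
`|t sin²θ| ≤ |t|` it is dominated uniformly in `θ`; integrating it term by term with Wallis'
formula `∫₀^{π/2} sin^{2n} θ dθ = (π/2) (1/2)ₙ/n!` gives the series.
-/

open Real MeasureTheory Finset
open scoped Nat

theorem ascPochhammer_eval_eq_prod_range {R : Type*} [CommSemiring R] (a : R) (n : ℕ) :
    (ascPochhammer R n).eval a = ∏ k ∈ range n, (a + k) := by
  induction n with
  | zero => simp
  | succ n ih => rw [ascPochhammer_succ_eval, ih, prod_range_succ]

theorem Ring.choose_add_sub_one_eq_prod_div_factorial {R : Type*} [Field R] [CharZero R]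
    (a : R) (n : ℕ) : Ring.choose (a + n - 1) n = (∏ k ∈ range n, (a + k)) / n ! := by
  rw [Ring.choose_eq_smul, Polynomial.descPochhammer_smeval_eq_ascPochhammer,
    Polynomial.ascPochhammer_smeval_eq_eval, ascPochhammer_eval_eq_prod_range, smul_eq_mul,
    inv_mul_eq_div]
  congr 1
  exact prod_congr rfl fun k _ ↦ by ring

namespace Real

theorem hasFPowerSeriesOnBall_one_div_one_sub_rpow (a : ℝ) :
    HasFPowerSeriesOnBall (fun x ↦ 1 / (1 - x) ^ a)
      (.ofScalars ℝ fun n ↦ (∏ k ∈ range n, (a + k)) / n !) 0 1 := by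
  simpa only [Ring.choose_add_sub_one_eq_prod_div_factorial]
    using one_div_one_sub_rpow_hasFPowerSeriesOnBall_zero a

theorem mem_eball_zero_one_of_abs_lt_one {u : ℝ} (hu : |u| < 1) :
    u ∈ Metric.eball (0 : ℝ) 1 := by
  rw [← ENNReal.ofReal_one, Metric.eball_ofReal]
  simpa using hu

theorem hasSum_prod_div_factorial_mul_pow (a : ℝ) {u : ℝ} (hu : |u| < 1) :
    HasSum (fun n ↦ (∏ k ∈ range n, (a + k)) / n ! * u ^ n) (1 / (1 - u) ^ a) := by
  simpa only [FormalMultilinearSeries.ofScalars_apply_eq, smul_eq_mul, zero_add] using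
    (hasFPowerSeriesOnBall_one_div_one_sub_rpow a).hasSum (mem_eball_zero_one_of_abs_lt_one hu)

theorem summable_norm_prod_div_factorial_mul_pow (a : ℝ) {u : ℝ} (hu : |u| < 1) :
    Summable fun n ↦ ‖(∏ k ∈ range n, (a + k)) / n ! * u ^ n‖ := by
  have hf := hasFPowerSeriesOnBall_one_div_one_sub_rpow a
  simpa only [FormalMultilinearSeries.ofScalars_apply_eq, smul_eq_mul] using
    FormalMultilinearSeries.summable_norm_apply _
      (Metric.eball_subset_eball hf.r_le (mem_eball_zero_one_of_abs_lt_one hu))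

theorem hasSum_one_div_sqrt_one_sub {u : ℝ} (hu : |u| < 1) :
    HasSum (fun n ↦ (∏ k ∈ range n, ((1 : ℝ) / 2 + k)) / n ! * u ^ n) (1 / √(1 - u)) := by
  simpa only [← sqrt_eq_rpow] using hasSum_prod_div_factorial_mul_pow (1 / 2) hu

theorem integral_sin_pow_even_zero_pi_div_two (n : ℕ) :
    ∫ x in 0..π / 2, sin x ^ (2 * n) = π / 2 * ((∏ k ∈ range n, ((1 : ℝ) / 2 + k)) / n !) := by
  induction n with
  | zero => simp
  | succ k ih =>
    rw [mul_add, mul_one, integral_sin_pow, ih, prod_range_succ, Nat.factorial_succ, sin_zero,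
      cos_pi_div_two]
    push_cast
    field_simp
    ring

theorem hasSum_integral_comp_mul_sin_sq {c : ℕ → ℝ} {f : ℝ → ℝ} {t : ℝ}
    (hc : Summable fun n ↦ ‖c n * t ^ n‖)
    (hf : ∀ u, |u| ≤ |t| → HasSum (fun n ↦ c n * u ^ n) (f u)) :
    HasSum (fun n ↦ π / 2 * (c n * ((∏ k ∈ range n, ((1 : ℝ) / 2 + k)) / n !) * t ^ n))
      (∫ θ in 0..π / 2, f (t * sin θ ^ 2)) := by
  have hterm (θ : ℝ) : (fun n ↦ c n * (t * sin θ ^ 2) ^ n) =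
      fun n ↦ c n * t ^ n * sin θ ^ (2 * n) :=
    funext fun n ↦ by rw [mul_pow, pow_mul]; ring
  have hsin_sq_le (θ : ℝ) : |sin θ| ^ 2 ≤ 1 := by rw [sq_abs]; exact sin_sq_le_one θ
  have hbound (n : ℕ) (θ : ℝ) : ‖c n * t ^ n * sin θ ^ (2 * n)‖ ≤ ‖c n * t ^ n‖ := by
    rw [norm_mul _ (sin θ ^ _), norm_pow, pow_mul, Real.norm_eq_abs (sin θ)]
    exact mul_le_of_le_one_right (norm_nonneg _) (pow_le_one₀ (sq_nonneg _) (hsin_sq_le θ))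
  have hsum := intervalIntegral.hasSum_integral_of_dominated_convergence
    (F := fun n θ ↦ c n * t ^ n * sin θ ^ (2 * n)) (f := fun θ ↦ f (t * sin θ ^ 2))
    (a := 0) (b := π / 2) (μ := volume) (fun n _ ↦ ‖c n * t ^ n‖)
    (fun n ↦ (by fun_prop : Continuous _).aestronglyMeasurable)
    (fun n ↦ ae_of_all _ fun θ _ ↦ hbound n θ) (ae_of_all _ fun _ _ ↦ hc) intervalIntegrable_const
    (ae_of_all _ fun θ _ ↦ hterm θ ▸ hf (t * sin θ ^ 2) (by
      rw [abs_mul, abs_pow]; exact mul_le_of_le_one_right (abs_nonneg t) (hsin_sq_le θ)))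
  have hmoment (n : ℕ) : ∫ θ in 0..π / 2, c n * t ^ n * sin θ ^ (2 * n) =
      π / 2 * (c n * ((∏ k ∈ range n, ((1 : ℝ) / 2 + k)) / n !) * t ^ n) := by
    rw [intervalIntegral.integral_const_mul, integral_sin_pow_even_zero_pi_div_two]
    ring
  simpa only [hmoment] using hsum

theorem sin_image_Ioo_zero_pi_div_two : sin '' Set.Ioo 0 (π / 2) = Set.Ioo 0 1 := by
  rw [continuousOn_sin.image_Ioo_of_strictMonoOn pi_div_two_pos.le
    (strictMonoOn_sin.mono (Set.Icc_subset_Icc (by linarith [pi_pos]) le_rfl)), sin_zero,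
    sin_pi_div_two]

theorem injOn_sin_Ioo_zero_pi_div_two : Set.InjOn sin (Set.Ioo 0 (π / 2)) :=
  injOn_sin.mono fun _ hx ↦ Set.mem_Icc.mpr ⟨by linarith [pi_pos, hx.1], hx.2.le⟩

theorem cos_pos_of_mem_Ioo_zero_pi_div_two {θ : ℝ} (hθ : θ ∈ Set.Ioo 0 (π / 2)) : 0 < cos θ :=
  cos_pos_of_mem_Ioo ⟨by linarith [pi_pos, hθ.1], hθ.2⟩

theorem integrableOn_Ioo_zero_one_iff_comp_sin {g : ℝ → ℝ} :
    IntegrableOn g (Set.Ioo 0 1) ↔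
      IntegrableOn (fun θ ↦ cos θ * g (sin θ)) (Set.Ioo 0 (π / 2)) := by
  rw [← sin_image_Ioo_zero_pi_div_two, integrableOn_image_iff_integrableOn_abs_deriv_smul
    measurableSet_Ioo (fun x _ ↦ (hasDerivAt_sin x).hasDerivWithinAt)
    injOn_sin_Ioo_zero_pi_div_two]
  exact integrableOn_congr_fun (fun θ hθ ↦ by
    simp only [abs_of_pos (cos_pos_of_mem_Ioo_zero_pi_div_two hθ), smul_eq_mul]) measurableSet_Ioo

theorem integral_Ioo_zero_one_eq_integral_comp_sin (g : ℝ → ℝ) :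
    ∫ x in Set.Ioo 0 1, g x = ∫ θ in Set.Ioo 0 (π / 2), cos θ * g (sin θ) := by
  rw [← sin_image_Ioo_zero_pi_div_two, integral_image_eq_integral_abs_deriv_smul
    measurableSet_Ioo (fun x _ ↦ (hasDerivAt_sin x).hasDerivWithinAt)
    injOn_sin_Ioo_zero_pi_div_two]
  exact setIntegral_congr_fun measurableSet_Ioo fun θ hθ ↦ by
    simp only [abs_of_pos (cos_pos_of_mem_Ioo_zero_pi_div_two hθ), smul_eq_mul]

theorem cos_mul_one_div_sqrt_one_sub_sin_sq_mul {θ : ℝ} (hθ : θ ∈ Set.Ioo 0 (π / 2)) (t : ℝ) :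
    cos θ * (1 / √((1 - sin θ ^ 2) * (1 - t * sin θ ^ 2))) = 1 / √(1 - t * sin θ ^ 2) := by
  have hcos := cos_pos_of_mem_Ioo_zero_pi_div_two hθ
  rw [← cos_sq', sqrt_mul (sq_nonneg _), sqrt_sq hcos.le]
  field_simp

end Real

theorem elliptic_integral_hypergeometric (t : ℝ) (ht0 : 0 ≤ t) (ht1 : t < 1) :
    IntegrableOn (fun x : ℝ => 1 / Real.sqrt ((1 - x ^ 2) * (1 - t * x ^ 2)))
      (Set.Ioo 0 1) ∧
    ∫ x in Set.Ioo (0 : ℝ) 1, 1 / Real.sqrt ((1 - x ^ 2) * (1 - t * x ^ 2)) =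
      (π / 2) * ∑' n : ℕ,
        ((∏ k ∈ Finset.range n, ((1 : ℝ) / 2 + (k : ℝ))) / (n.factorial : ℝ)) ^ 2 * t ^ n := by
  have ht : |t| < 1 := abs_lt.mpr ⟨by linarith, ht1⟩
  have hsubst : Set.EqOn (fun θ ↦ cos θ * (1 / √((1 - sin θ ^ 2) * (1 - t * sin θ ^ 2))))
      (fun θ ↦ 1 / √(1 - t * sin θ ^ 2)) (Set.Ioo 0 (π / 2)) :=
    fun θ hθ ↦ cos_mul_one_div_sqrt_one_sub_sin_sq_mul hθ t
  have hcont : Continuous fun θ ↦ 1 / √(1 - t * sin θ ^ 2) :=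
    continuous_const.div (by fun_prop) fun θ ↦
      (sqrt_pos.2 (by nlinarith [sin_sq_le_one θ, sq_nonneg (sin θ)])).ne'
  refine ⟨?_, ?_⟩
  · rw [integrableOn_Ioo_zero_one_iff_comp_sin, integrableOn_congr_fun hsubst measurableSet_Ioo]
    exact hcont.integrableOn_Icc.mono_set Set.Ioo_subset_Icc_self
  · rw [integral_Ioo_zero_one_eq_integral_comp_sin, setIntegral_congr_fun measurableSet_Ioo hsubst,
      ← integral_Ioc_eq_integral_Ioo, ← intervalIntegral.integral_of_le pi_div_two_pos.le,
      ← (hasSum_integral_comp_mul_sin_sq (summable_norm_prod_div_factorial_mul_pow _ ht)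
        fun u hu ↦ hasSum_one_div_sqrt_one_sub (hu.trans_lt ht)).tsum_eq, tsum_mul_left]
    simp only [sq]
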